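/- arXiv:2202.12380 — 2 statements merged into one kernel-verified Lean document; each statement's English description precedes it below -/
import Mathlib

section
/- For every k ≥ 0, the residual of the approximate coefficient-domain matching pursuit with resets satisfies ‖r_{k+1}‖₂² ≤ (1 − q)·‖r_k‖₂², where q = ϵ'·(1+δ)^{−2}·λ_min; i.e., the residual energy decays exponentially in the number of selection steps. -/
/-!
Write `b_i = ⟨r_k, d_i⟩` for the exact coefficients of the residual and `a = ĉ_k(p_{k+1})` for the
selected one. Since `r_{k+1} = r_k − a d_p` with `‖d_p‖ = 1`,
`‖r_{k+1}‖² = ‖r_k‖² − |b_p|² + |a − b_p|²`.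
Each update replaces `G` by `G_ε`, an entrywise error of at most `ε`, so since the last reset every
`ĉ_k(i)` is within `ε Σ_k` of `b_i`. After a reset the error is zero; otherwise the first reset test
failed, i.e. `ε Σ_k ≤ δ |a|`. As `|a|` is maximal among the `|ĉ_k(i)|`, this gives
`|b_p|² − |a − b_p|² ≥ (1 − 2δ)|a|² ≥ ϵ' |a|²` and `λ_min ‖r_k‖² ≤ max_i |b_i|² ≤ (1 + δ)² |a|²`.
-/

open scoped BigOperators
open ComplexConjugate

/-- The inner product `⟨u,v⟩ = ∑ l, u l * conj (v l)`. -/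
noncomputable def cip {L : ℕ} (u v : Fin L → ℂ) : ℂ := ∑ l, u l * conj (v l)

/-- The Euclidean norm `‖u‖₂ = √(∑ l, |u l|²)`. -/
noncomputable def nrm {L : ℕ} (u : Fin L → ℂ) : ℝ := Real.sqrt (∑ l, ‖u l‖ ^ 2)

theorem norm_sub_smul_sq_of_norm_eq_one {𝕜 E : Type*} [RCLike 𝕜] [SeminormedAddCommGroup E]
    [InnerProductSpace 𝕜 E] {d : E} (hd : ‖d‖ = 1) (u : E) (c : 𝕜) :
    ‖u - c • d‖ ^ 2 = ‖u‖ ^ 2 - ‖inner 𝕜 d u‖ ^ 2 + ‖c - inner 𝕜 d u‖ ^ 2 := by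
  have hre : RCLike.re (inner 𝕜 d u * conj c) = RCLike.re (c * conj (inner 𝕜 d u)) := by
    rw [← RCLike.conj_re, map_mul, RCLike.conj_conj, mul_comm]
  rw [norm_sub_sq (𝕜 := 𝕜) u, norm_sub_sq (𝕜 := 𝕜) c, norm_smul, hd, inner_smul_right,
    RCLike.inner_apply, ← inner_conj_symm, hre]
  ring

theorem approx_argmax_energy_gain {ι F : Type*} [SeminormedAddCommGroup F] {b a : ι → F}
    {p i₀ : ι} {δ ϵ' lam N : ℝ} (hδ : 0 ≤ δ) (hϵ' : 0 ≤ ϵ') (hδϵ' : 2 * δ + ϵ' ≤ 1)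
    (hmax : ∀ i, ‖a i‖ ≤ ‖a p‖) (herr : ∀ i, ‖a i - b i‖ ≤ δ * ‖a p‖)
    (hlam : lam * N ≤ ‖b i₀‖ ^ 2) :
    ϵ' / (1 + δ) ^ 2 * lam * N ≤ ‖b p‖ ^ 2 - ‖a p - b p‖ ^ 2 := by
  have hb₀ : ‖b i₀‖ ≤ (1 + δ) * ‖a p‖ := by
    have := norm_le_norm_add_norm_sub' (b i₀) (a i₀)
    rw [norm_sub_rev] at this
    linarith [hmax i₀, herr i₀]
  have hbp : ‖a p‖ ≤ ‖b p‖ + ‖a p - b p‖ := norm_le_norm_add_norm_sub' _ _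
  have hgain : ϵ' * ‖a p‖ ^ 2 ≤ ‖b p‖ ^ 2 - ‖a p - b p‖ ^ 2 := by
    have hB := herr p
    have hCB : 0 ≤ ‖a p‖ - ‖a p - b p‖ := by nlinarith [norm_nonneg (a p)]
    have hsq := pow_le_pow_left₀ hCB (by linarith : ‖a p‖ - ‖a p - b p‖ ≤ ‖b p‖) 2
    nlinarith [mul_le_mul_of_nonneg_right hB (norm_nonneg (a p)), sq_nonneg ‖a p‖]
  calc ϵ' / (1 + δ) ^ 2 * lam * N ≤ ϵ' / (1 + δ) ^ 2 * ((1 + δ) * ‖a p‖) ^ 2 := by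
        rw [mul_assoc]
        gcongr
        exact hlam.trans (pow_le_pow_left₀ (norm_nonneg _) hb₀ 2)
    _ = ϵ' * ‖a p‖ ^ 2 := by field_simp
    _ ≤ _ := hgain

theorem norm_sub_ite_lt_norm_le {E : Type*} [SeminormedAddGroup E] {ε : ℝ} (hε : 0 ≤ ε) (z : E) :
    ‖z - if ε < ‖z‖ then z else 0‖ ≤ ε := by
  split_ifs with h
  · simpa using hε
  · simpa using not_lt.mp h

theorem norm_sub_le_of_inexact_updates {ι R : Type*} [SeminormedRing R] {ε : ℝ}
    {t cpre chat g gε : ℕ → ι → R} {a : ℕ → R} {S : ℕ → ℝ}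
    (hgε : ∀ k i, ‖g k i - gε k i‖ ≤ ε)
    (ht : ∀ k i, t (k + 1) i = t k i - a k * g k i)
    (hcpre : ∀ k i, cpre (k + 1) i = chat k i - a k * gε k i)
    (h0 : cpre 0 = t 0) (hS0 : S 0 = 0)
    (hstep : ∀ k, chat k = t k ∧ S (k + 1) = ‖a k‖ ∨
      chat k = cpre k ∧ S (k + 1) = S k + ‖a k‖) :
    ∀ k i, ‖cpre k i - t k i‖ ≤ ε * S k := by
  intro k
  induction k with
  | zero => simp [h0, hS0]
  | succ k ih =>
    intro i
    have hsplit : cpre (k + 1) i - t (k + 1) i = (chat k i - t k i) + a k * (g k i - gε k i) := by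
      rw [hcpre, ht]
      noncomm_ring
    have hupdate : ‖a k * (g k i - gε k i)‖ ≤ ε * ‖a k‖ :=
      (norm_mul_le _ _).trans (by rw [mul_comm]; gcongr; exact hgε k i)
    rw [hsplit]
    rcases hstep k with ⟨hchat, hS⟩ | ⟨hchat, hS⟩
    · simpa [hchat, hS] using hupdate
    · rw [hchat, hS, mul_add]
      exact (norm_add_le _ _).trans (add_le_add (ih i) hupdate)

theorem le_self_of_eq_self_or_eq_prev {m m' : ℕ → ℕ} (h0 : m 0 = 0) (hm : ∀ k, m (k + 1) = m' k)
    (hm' : ∀ k, m' k = k ∨ m' k = m k) (k : ℕ) : m' k ≤ k := by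
  induction k with
  | zero => rcases hm' 0 with h | h <;> omega
  | succ k ih => rcases hm' (k + 1) with h | h <;> grind

theorem sub_mulVec_add_single {m n R : Type*} [Fintype n] [DecidableEq n] [CommRing R]
    (D : Matrix m n R) (x : m → R) (c : n → R) (j : n) (a : R) :
    x - D.mulVec (c + Pi.single j a) = x - D.mulVec c - a • fun l => D l j := by
  ext l
  simp [Matrix.mulVec_add, Matrix.mulVec_single, sub_sub]

section Euclidean

variable {L : ℕ}

theorem cip_eq_inner (u v : Fin L → ℂ) :
    cip u v = inner ℂ (WithLp.toLp 2 v : EuclideanSpace ℂ (Fin L)) (WithLp.toLp 2 u) := by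
  simp [cip, PiLp.inner_apply, RCLike.inner_apply]

theorem nrm_eq_norm (u : Fin L → ℂ) : nrm u = ‖(WithLp.toLp 2 u : EuclideanSpace ℂ (Fin L))‖ := by
  rw [nrm, EuclideanSpace.norm_eq]

theorem nrm_nonneg (u : Fin L → ℂ) : 0 ≤ nrm u := Real.sqrt_nonneg _

theorem nrm_smul (a : ℂ) (u : Fin L → ℂ) : nrm (a • u) = ‖a‖ * nrm u := by
  rw [nrm_eq_norm, nrm_eq_norm, WithLp.toLp_smul, norm_smul]

theorem cip_sub_left (u v w : Fin L → ℂ) : cip (u - v) w = cip u w - cip v w := by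
  simp only [cip_eq_inner, WithLp.toLp_sub, inner_sub_right]

theorem cip_smul_left (a : ℂ) (u w : Fin L → ℂ) : cip (a • u) w = a * cip u w := by
  simp only [cip_eq_inner, WithLp.toLp_smul, inner_smul_right]

theorem nrm_sub_smul_sq {d : Fin L → ℂ} (hd : nrm d = 1) (u : Fin L → ℂ) (a : ℂ) :
    nrm (u - a • d) ^ 2 = nrm u ^ 2 - ‖cip u d‖ ^ 2 + ‖a - cip u d‖ ^ 2 := by
  rw [nrm_eq_norm] at hd ⊢
  rw [nrm_eq_norm, cip_eq_inner, WithLp.toLp_sub, WithLp.toLp_smul,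
    norm_sub_smul_sq_of_norm_eq_one hd]

theorem exists_iInf_mul_nrm_sq_le {ι : Type*} [Finite ι] [Nonempty ι] (d : ι → Fin L → ℂ)
    (y : Fin L → ℂ) :
    ∃ i, (⨅ z : {z : Fin L → ℂ // nrm z = 1}, ⨆ j, ‖cip (z : Fin L → ℂ) (d j)‖ ^ 2) * nrm y ^ 2
      ≤ ‖cip y (d i)‖ ^ 2 := by
  obtain ⟨i, hi⟩ := Finite.exists_max fun i => ‖cip y (d i)‖ ^ 2
  refine ⟨i, ?_⟩
  rcases (nrm_nonneg y).eq_or_lt with hy | hy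
  · simp [← hy]
  set z := ((nrm y : ℂ))⁻¹ • y
  have hz : nrm z = 1 := by
    rw [nrm_smul, norm_inv, Complex.norm_real, Real.norm_of_nonneg hy.le, inv_mul_cancel₀ hy.ne']
  have hcz : ∀ j, ‖cip z (d j)‖ ^ 2 = ‖cip y (d j)‖ ^ 2 / nrm y ^ 2 := fun j => by
    rw [cip_smul_left, norm_mul, norm_inv, Complex.norm_real, Real.norm_of_nonneg hy.le]
    field_simp
  have hbdd : BddBelow (Set.range fun z : {z : Fin L → ℂ // nrm z = 1} =>
      ⨆ j, ‖cip (z : Fin L → ℂ) (d j)‖ ^ 2) :=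
    ⟨0, by rintro _ ⟨w, rfl⟩; exact Real.iSup_nonneg fun j => sq_nonneg _⟩
  rw [← le_div_iff₀ (by positivity)]
  calc _ ≤ ⨆ j, ‖cip z (d j)‖ ^ 2 := ciInf_le hbdd ⟨z, hz⟩
    _ ≤ _ := ciSup_le fun j => by rw [hcz]; exact div_le_div_of_nonneg_right (hi j) (by positivity)

end Euclidean

theorem cdmp_coeff_error_le {L P : ℕ} (x : Fin L → ℂ) (D : Matrix (Fin L) (Fin P) ℂ) {ε : ℝ}
    (hε : 0 ≤ ε) (G Gε : Matrix (Fin P) (Fin P) ℂ)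
    (hG : ∀ i j, G i j = cip (fun l => D l j) (fun l => D l i))
    (hGε : ∀ i j, Gε i j = if ε < ‖G i j‖ then G i j else 0)
    (c cpre chat : ℕ → Fin P → ℂ) (p : ℕ → Fin P) (koutpre kout : ℕ → ℕ)
    (r : ℕ → Fin L → ℂ) (hr : ∀ k, r k = x - D.mulVec (c k))
    (S : ℕ → ℝ)
    (hS : ∀ k, S k = ∑ l ∈ Finset.Icc (koutpre k + 1) k, ‖chat (l - 1) (p l)‖)
    (R : ℕ → Prop)
    (hc0 : c 0 = 0)
    (hcpre0 : ∀ i, cpre 0 i = cip x (fun l => D l i))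
    (hkoutpre0 : koutpre 0 = 0)
    (hresetT : ∀ k, R k → (chat k = fun i => cip (r k) (fun l => D l i)) ∧ kout k = k)
    (hresetF : ∀ k, ¬ R k → chat k = cpre k ∧ kout k = koutpre k)
    (hcrec : ∀ k, c (k + 1) = c k + Pi.single (p (k + 1)) (chat k (p (k + 1))))
    (hcprerec : ∀ k, cpre (k + 1) = fun i => chat k i - chat k (p (k + 1)) * Gε i (p (k + 1)))
    (hkoutrec : ∀ k, koutpre (k + 1) = kout k) :
    ∀ k i, ‖cpre k i - cip (r k) (fun l => D l i)‖ ≤ ε * S k := by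
  have hkout_le : ∀ k, kout k ≤ k := le_self_of_eq_self_or_eq_prev hkoutpre0 hkoutrec fun k =>
    (em (R k)).imp (fun h => (hresetT k h).2) (fun h => (hresetF k h).2)
  have hS_succ : ∀ k, S (k + 1) =
      ∑ l ∈ Finset.Icc (kout k + 1) k, ‖chat (l - 1) (p l)‖ + ‖chat k (p (k + 1))‖ := fun k => by
    rw [hS, hkoutrec, Finset.sum_Icc_succ_top (Nat.succ_le_succ (hkout_le k)), Nat.add_sub_cancel]
  refine norm_sub_le_of_inexact_updates (g := fun k i => G i (p (k + 1)))
    (fun k i => hGε i (p (k + 1)) ▸ norm_sub_ite_lt_norm_le hε _) (fun k i => ?_)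
    (fun k i => congrFun (hcprerec k) i) (funext fun i => by simp [hcpre0, hr, hc0])
    (by simp [hS, hkoutpre0]) (fun k => ?_)
  · rw [hr, hcrec, sub_mulVec_add_single, ← hr, cip_sub_left, cip_smul_left, hG]
  · by_cases h : R k
    · obtain ⟨hchat, hkout⟩ := hresetT k h
      refine .inl ⟨hchat, ?_⟩
      rw [hS_succ, hkout, Finset.Icc_eq_empty (by omega), Finset.sum_empty, zero_add]
    · obtain ⟨hchat, hkout⟩ := hresetF k h
      exact .inr ⟨hchat, by rw [hS_succ, hkout, ← hS]⟩

/- `cpre k`, `ppre (k+1)`, `koutpre k` are the pre-reset quantities `ĉ_k`, `p_{k+1}`, `k°_k`, `R k` is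
the reset criterion evaluated on them, and `chat k`, `p (k+1)`, `kout k` are the post-reset
quantities used in the update. -/
theorem approx_cdmp_with_resets_exponential_decay_general
    {L P : ℕ}
    (x : Fin L → ℂ) (D : Matrix (Fin L) (Fin P) ℂ)
    (hDnorm : ∀ i, nrm (fun l => D l i) = 1)
    (lammin : ℝ)
    (hlam : lammin = ⨅ y : {y : Fin L → ℂ // nrm y = 1},
      ⨆ i : Fin P, ‖cip (y : Fin L → ℂ) (fun l => D l i)‖ ^ 2)
    (ε δ ϵ' q : ℝ)
    (hε0 : 0 < ε)
    (hδ0 : 0 < δ)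
    (hϵ'0 : 0 < ϵ') (hϵ' : ϵ' < 1 - 2 * δ)
    (hq : q = ϵ' / (1 + δ) ^ 2 * lammin)
    (G Gε : Matrix (Fin P) (Fin P) ℂ)
    (hG : ∀ i j, G i j = cip (fun l => D l j) (fun l => D l i))
    (hGε : ∀ i j, Gε i j = if ε < ‖G i j‖ then G i j else 0)
    (c cpre chat : ℕ → Fin P → ℂ) (ppre p : ℕ → Fin P) (koutpre kout : ℕ → ℕ)
    (r : ℕ → Fin L → ℂ) (hr : ∀ k, r k = x - D.mulVec (c k))
    (S : ℕ → ℝ)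
    (hS : ∀ k, S k = ∑ l ∈ Finset.Icc (koutpre k + 1) k, ‖chat (l - 1) (p l)‖)
    (R : ℕ → Prop)
    (hR : ∀ k, R k ↔
      (‖cpre k (ppre (k + 1))‖ < ε / δ * S k ∨
        ‖cpre k (ppre (k + 1))‖ <
          2 * δ * (1 - q) ^ (((koutpre k : ℝ) - (k : ℝ)) / 2) / (1 - (2 * δ + ϵ')) *
            nrm (r (koutpre k))))
    (hc0 : c 0 = 0)
    (hcpre0 : ∀ i, cpre 0 i = cip x (fun l => D l i))
    (hkoutpre0 : koutpre 0 = 0)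
    (hresetT : ∀ k, R k → (chat k = fun i => cip (r k) (fun l => D l i)) ∧ kout k = k)
    (hresetF : ∀ k, ¬ R k → chat k = cpre k ∧ p (k + 1) = ppre (k + 1) ∧ kout k = koutpre k)
    (hp : ∀ k i, ‖chat k i‖ ≤ ‖chat k (p (k + 1))‖)
    (hcrec : ∀ k, c (k + 1) = c k + Pi.single (p (k + 1)) (chat k (p (k + 1))))
    (hcprerec : ∀ k, cpre (k + 1) = fun i => chat k i - chat k (p (k + 1)) * Gε i (p (k + 1)))
    (hkoutrec : ∀ k, koutpre (k + 1) = kout k) :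
    ∀ k, nrm (r (k + 1)) ^ 2 ≤ (1 - q) * nrm (r k) ^ 2 := by
  have herr := cdmp_coeff_error_le x D hε0.le G Gε hG hGε c cpre chat p koutpre kout r hr S hS R hc0
    hcpre0 hkoutpre0 hresetT (fun k h => ⟨(hresetF k h).1, (hresetF k h).2.2⟩) hcrec hcprerec
    hkoutrec
  have : Nonempty (Fin P) := ⟨p 0⟩
  intro k
  have hacc : ∀ i, ‖chat k i - cip (r k) (fun l => D l i)‖ ≤ δ * ‖chat k (p (k + 1))‖ := by
    by_cases hRk : R k
    · intro i
      rw [(hresetT k hRk).1, sub_self, norm_zero]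
      positivity
    · obtain ⟨hchat, hpk, -⟩ := hresetF k hRk
      have hS : ε / δ * S k ≤ ‖cpre k (ppre (k + 1))‖ :=
        not_lt.mp fun h => hRk ((hR k).mpr (.inl h))
      rw [div_mul_eq_mul_div, div_le_iff₀' hδ0] at hS
      rw [hchat, hpk]
      exact fun i => (herr k i).trans hS
  obtain ⟨i₀, hi₀⟩ := exists_iInf_mul_nrm_sq_le (fun i l => D l i) (r k)
  have hgain := approx_argmax_energy_gain hδ0.le hϵ'0.le (by linarith) (hp k) hacc (hlam ▸ hi₀)
  rw [hr (k + 1), hcrec, sub_mulVec_add_single, ← hr, nrm_sub_smul_sq (hDnorm _), hq]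
  linarith

/-- Theorem 2 of the paper: approximate coefficient-domain matching
pursuit with resets contracts the residual energy exponentially:
`‖r_{k+1}‖₂² ≤ (1 − q)·‖r_k‖₂²` for every `k ≥ 0`, where
`q = ϵ'·(1+δ)⁻²·λ_min`.

Here `cpre k`, `ppre (k+1)`, `koutpre k` denote the pre-reset quantities `ĉ_k`, `p_{k+1}`,
`k°_k` at step `k`, `R k` is the reset criterion evaluated on them, and `chat k`,
`p (k+1)`, `kout k` are the corresponding effective (post-reset) quantities used in
the update. -/
theorem approx_cdmp_with_resets_exponential_decay
    {L P : ℕ} (hL : 0 < L) (hP : 0 < P)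
    (x : Fin L → ℂ) (D : Matrix (Fin L) (Fin P) ℂ)
    (hDnorm : ∀ i, nrm (fun l => D l i) = 1)
    (hspan : Submodule.span ℂ (Set.range fun i => (fun l => D l i)) = ⊤)
    (lammin : ℝ)
    (hlam : lammin = ⨅ y : {y : Fin L → ℂ // nrm y = 1},
      ⨆ i : Fin P, ‖cip (y : Fin L → ℂ) (fun l => D l i)‖ ^ 2)
    (ε δ ϵ' q : ℝ)
    (hε0 : 0 < ε) (hε1 : ε < 1)
    (hδ0 : 0 < δ) (hδ : δ < 1 / 2)
    (hϵ'0 : 0 < ϵ') (hϵ' : ϵ' < 1 - 2 * δ)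
    (hconstr : 2 * δ / (1 - (2 * δ + ϵ')) < Real.sqrt lammin)
    (hq : q = ϵ' / (1 + δ) ^ 2 * lammin)
    (G Gε : Matrix (Fin P) (Fin P) ℂ)
    (hG : ∀ i j, G i j = cip (fun l => D l j) (fun l => D l i))
    (hGε : ∀ i j, Gε i j = if ε < ‖G i j‖ then G i j else 0)
    (c cpre chat : ℕ → Fin P → ℂ) (ppre p : ℕ → Fin P) (koutpre kout : ℕ → ℕ)
    (r : ℕ → Fin L → ℂ) (hr : ∀ k, r k = x - D.mulVec (c k))
    (S : ℕ → ℝ)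
    (hS : ∀ k, S k = ∑ l ∈ Finset.Icc (koutpre k + 1) k, ‖chat (l - 1) (p l)‖)
    (R : ℕ → Prop)
    (hR : ∀ k, R k ↔
      (‖cpre k (ppre (k + 1))‖ < ε / δ * S k ∨
        ‖cpre k (ppre (k + 1))‖ <
          2 * δ * (1 - q) ^ (((koutpre k : ℝ) - (k : ℝ)) / 2) / (1 - (2 * δ + ϵ')) *
            nrm (r (koutpre k))))
    (hc0 : c 0 = 0)
    (hcpre0 : ∀ i, cpre 0 i = cip x (fun l => D l i))
    (hkoutpre0 : koutpre 0 = 0)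
    (hppre : ∀ k i, ‖cpre k i‖ ≤ ‖cpre k (ppre (k + 1))‖)
    (hresetT : ∀ k, R k → (chat k = fun i => cip (r k) (fun l => D l i)) ∧ kout k = k)
    (hresetF : ∀ k, ¬ R k → chat k = cpre k ∧ p (k + 1) = ppre (k + 1) ∧ kout k = koutpre k)
    (hp : ∀ k i, ‖chat k i‖ ≤ ‖chat k (p (k + 1))‖)
    (hcrec : ∀ k, c (k + 1) = c k + Pi.single (p (k + 1)) (chat k (p (k + 1))))
    (hcprerec : ∀ k, cpre (k + 1) = fun i => chat k i - chat k (p (k + 1)) * Gε i (p (k + 1)))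
    (hkoutrec : ∀ k, koutpre (k + 1) = kout k) :
    ∀ k, nrm (r (k + 1)) ^ 2 ≤ (1 - q) * nrm (r k) ^ 2 :=
  approx_cdmp_with_resets_exponential_decay_general x D hDnorm lammin hlam ε δ ϵ' q hε0 hδ0 hϵ'0 hϵ'
    hq G Gε hG hGε c cpre chat ppre p koutpre kout r hr S hS R hR hc0 hcpre0 hkoutpre0 hresetT
    hresetF hp hcrec hcprerec hkoutrec
end

section
/- For every k ≥ 0 and every index p, the coefficient-domain residual estimate of approximate coefficient-domain matching pursuit deviates from the true analysis coefficients of the residual by at most the accumulated truncation error: |⟨r_k, d_p⟩ − ĉ_k(p)| ≤ ε·Σ_k. -/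
open scoped BigOperators
open ComplexConjugate

/-!
Both coefficient vectors are affine in the coefficients `c_k`: the true analysis coefficients
of `r_k = x - D c_k` are `D*x - G c_k`, while the recursion keeps `ĉ_k = D*x - G_ε c_k`.
Their difference is `(G_ε - G) c_k`, whose entries are at most `ε ‖c_k‖₁`, and each step adds
at most `|ĉ_{l-1}(p_l)|` to `‖c_k‖₁`.
-/

open Matrix

lemma norm_ite_lt_norm_sub_le {E : Type*} [SeminormedAddGroup E] {ε : ℝ} (hε : 0 ≤ ε) (z : E) :
    ‖(if ε < ‖z‖ then z else 0) - z‖ ≤ ε := by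
  split_ifs with h
  · simpa using hε
  · simpa using not_lt.mp h

lemma norm_mulVec_apply_le {m n R : Type*} [Fintype n] [SeminormedRing R]
    {A : Matrix m n R} {ε : ℝ} {i : m} (hA : ∀ j, ‖A i j‖ ≤ ε) (v : n → R) :
    ‖(A *ᵥ v) i‖ ≤ ε * ∑ j, ‖v j‖ := by
  rw [Finset.mul_sum]
  refine (norm_sum_le _ _).trans (Finset.sum_le_sum fun j _ => ?_)
  exact (norm_mul_le _ _).trans (mul_le_mul_of_nonneg_right (hA j) (norm_nonneg _))

lemma sum_norm_add_single_le {n E : Type*} [Fintype n] [DecidableEq n] [SeminormedAddCommGroup E]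
    (v : n → E) (j : n) (a : E) :
    ∑ i, ‖(v + Pi.single j a : n → E) i‖ ≤ ∑ i, ‖v i‖ + ‖a‖ := by
  have hsingle : ∑ i, ‖(Pi.single j a : n → E) i‖ = ‖a‖ := by
    simp [Pi.single_apply, apply_ite]
  calc ∑ i, ‖(v + Pi.single j a : n → E) i‖ ≤ ∑ i, (‖v i‖ + ‖(Pi.single j a : n → E) i‖) :=
        Finset.sum_le_sum fun i _ => norm_add_le _ _
    _ = ∑ i, ‖v i‖ + ‖a‖ := by rw [Finset.sum_add_distrib, hsingle]

lemma sum_norm_le_sum_range_of_add_single {n E : Type*} [Fintype n] [DecidableEq n]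
    [SeminormedAddCommGroup E]
    {c : ℕ → n → E} {a : ℕ → E} {p : ℕ → n} (hc0 : c 0 = 0)
    (hcrec : ∀ k, c (k + 1) = c k + Pi.single (p (k + 1)) (a k)) (k : ℕ) :
    ∑ i, ‖c k i‖ ≤ ∑ l ∈ Finset.range k, ‖a l‖ := by
  induction k with
  | zero => simp [hc0]
  | succ k ih =>
    rw [hcrec, Finset.sum_range_succ]
    exact (sum_norm_add_single_le _ _ _).trans (by gcongr)

lemma cip_col_eq_conjTranspose_mulVec {n : Type*} {L : ℕ} (D : Matrix (Fin L) n ℂ)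
    (u : Fin L → ℂ) (i : n) :
    cip u (fun l => D l i) = (Dᴴ *ᵥ u) i := by
  simp only [cip, mulVec, dotProduct, conjTranspose_apply, RCLike.star_def, mul_comm]

lemma eq_conjTranspose_mul_self_of_cip {n : Type*} [Fintype n] {L : ℕ}
    {D : Matrix (Fin L) n ℂ} {G : Matrix n n ℂ}
    (hG : ∀ i j, G i j = cip (fun l => D l j) (fun l => D l i)) :
    G = Dᴴ * D := by
  ext i j
  rw [hG, cip_col_eq_conjTranspose_mulVec]
  rfl

lemma eq_sub_mulVec_of_pursuit_step {n R : Type*} [Fintype n] [DecidableEq n] [CommRing R]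
    {A : Matrix n n R} {c chat : ℕ → n → R} {p : ℕ → n} {b : n → R}
    (hc0 : c 0 = 0) (hchat0 : chat 0 = b)
    (hchatrec : ∀ k, chat (k + 1) = fun i => chat k i - chat k (p (k + 1)) * A i (p (k + 1)))
    (hcrec : ∀ k, c (k + 1) = c k + Pi.single (p (k + 1)) (chat k (p (k + 1)))) (k : ℕ) :
    chat k = b - A *ᵥ c k := by
  induction k with
  | zero => simp [hc0, hchat0]
  | succ k ih =>
    ext i
    rw [hchatrec, hcrec, mulVec_add, mulVec_single, ih]
    simp only [Pi.sub_apply, Pi.add_apply, Pi.smul_apply, col_apply, op_smul_eq_mul]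
    ring

theorem approx_cdmp_residual_deviation_bound_general
    {L P : ℕ}
    (x : Fin L → ℂ) (D : Matrix (Fin L) (Fin P) ℂ)
    (ε : ℝ) (hε : 0 < ε)
    (G Gε : Matrix (Fin P) (Fin P) ℂ)
    (hG : ∀ i j, G i j = cip (fun l => D l j) (fun l => D l i))
    (hGε : ∀ i j, Gε i j = if ε < ‖G i j‖ then G i j else 0)
    (c chat : ℕ → Fin P → ℂ) (p : ℕ → Fin P)
    (hc0 : c 0 = 0)
    (hchat0 : ∀ i, chat 0 i = cip x (fun l => D l i))
    (hchatrec : ∀ k, chat (k + 1) = fun i => chat k i - chat k (p (k + 1)) * Gε i (p (k + 1)))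
    (hcrec : ∀ k, c (k + 1) = c k + Pi.single (p (k + 1)) (chat k (p (k + 1))))
    (r : ℕ → Fin L → ℂ) (hr : ∀ k, r k = x - D.mulVec (c k))
    (S : ℕ → ℝ)
    (hS : ∀ k, S k = ∑ l ∈ Finset.range k, ‖chat l (p (l + 1))‖) :
    ∀ k i, ‖cip (r k) (fun l => D l i) - chat k i‖ ≤ ε * S k := by
  intro k i
  have hchat : chat k = Dᴴ *ᵥ x - Gε *ᵥ c k :=
    eq_sub_mulVec_of_pursuit_step hc0 (funext fun i => (hchat0 i).trans
      (cip_col_eq_conjTranspose_mulVec D x i)) hchatrec hcrec k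
  have hdev : cip (r k) (fun l => D l i) - chat k i = ((Gε - G) *ᵥ c k) i := by
    rw [cip_col_eq_conjTranspose_mulVec, hr, hchat, mulVec_sub, mulVec_mulVec,
      ← eq_conjTranspose_mul_self_of_cip hG, sub_mulVec]
    simp only [Pi.sub_apply]
    ring
  have hentry (j : Fin P) : ‖(Gε - G) i j‖ ≤ ε := by
    simpa only [Matrix.sub_apply, hGε] using norm_ite_lt_norm_sub_le hε.le (G i j)
  calc ‖cip (r k) (fun l => D l i) - chat k i‖ ≤ ε * ∑ j, ‖c k j‖ :=
        hdev ▸ norm_mulVec_apply_le hentry (c k)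
    _ ≤ ε * S k := by
        rw [hS]
        exact mul_le_mul_of_nonneg_left (sum_norm_le_sum_range_of_add_single hc0 hcrec k) hε.le

/-- in approximate coefficient-domain matching pursuit, the
coefficient-domain residual estimate deviates from the true analysis coefficients
of the residual by at most the accumulated truncation error:
`|⟨r_k, d_p⟩ − ĉ_k(p)| ≤ ε·Σ_k`. -/
theorem approx_cdmp_residual_deviation_bound
    {L P : ℕ} (hL : 0 < L) (hP : 0 < P)
    (x : Fin L → ℂ) (D : Matrix (Fin L) (Fin P) ℂ)
    (hDnorm : ∀ q, nrm (fun l => D l q) = 1)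
    (ε : ℝ) (hε : 0 < ε)
    (G Gε : Matrix (Fin P) (Fin P) ℂ)
    (hG : ∀ i j, G i j = cip (fun l => D l j) (fun l => D l i))
    (hGε : ∀ i j, Gε i j = if ε < ‖G i j‖ then G i j else 0)
    (c chat : ℕ → Fin P → ℂ) (p : ℕ → Fin P)
    (hc0 : c 0 = 0)
    (hchat0 : ∀ i, chat 0 i = cip x (fun l => D l i))
    (hp : ∀ k i, ‖chat k i‖ ≤ ‖chat k (p (k + 1))‖)
    (hchatrec : ∀ k, chat (k + 1) = fun i => chat k i - chat k (p (k + 1)) * Gε i (p (k + 1)))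
    (hcrec : ∀ k, c (k + 1) = c k + Pi.single (p (k + 1)) (chat k (p (k + 1))))
    (r : ℕ → Fin L → ℂ) (hr : ∀ k, r k = x - D.mulVec (c k))
    (S : ℕ → ℝ)
    (hS : ∀ k, S k = ∑ l ∈ Finset.range k, ‖chat l (p (l + 1))‖) :
    ∀ k i, ‖cip (r k) (fun l => D l i) - chat k i‖ ≤ ε * S k :=
  approx_cdmp_residual_deviation_bound_general x D ε hε G Gε hG hGε c chat p hc0 hchat0 hchatrec
    hcrec r hr S hS
end
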